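/- arXiv:1809.00710 — 6 statements merged into one kernel-verified Lean document; each statement's English description precedes it below -/
import Mathlib

section
/- Let f : ℝ^n → ℝ be μ-strongly convex and L-smooth with 0 < μ ≤ L, let A ∈ ℝ^{p×n}, Ψ(x, y) = ⟨A^T y, x⟩ − f(x), φ(y) = max_{x ∈ ℝ^n} Ψ(x, y), and let x*(A^T y) denote the unique maximizer. Set L_φ = λ_max(A^T A)/μ and μ_φ = λ_min⁺(A^T A)/L. Fix y ∈ ℝ^p and ξ > 0, and let w ∈ ℝ^n satisfy Ψ(x*(A^T y), y) − Ψ(w, y) ≤ ξ. Then the pair (Ψ(w, y) − ξ, A w) is a (3ξ, 2L_φ, μ_φ/2)-oracle for φ at y: for all y' ∈ ℝ^p, φ(y') − (Ψ(w, y) − ξ + ⟨A w, y' − y⟩) ≤ L_φ·‖y' − y‖₂² + 3ξ, and for all y' with y' − y ∈ range(A), φ(y') − (Ψ(w, y) − ξ + ⟨A w, y' − y⟩) ≥ (μ_φ/4)·‖y' − y‖₂². -/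
open RealInnerProductSpace Matrix

/-!
Writing `s = Aᵀ y`, the dual function is `φ y = f* s`, with `f*` the convex conjugate. Strong
convexity of `f` makes `f*` a `1/μ`-smooth function, and an `ξ`-maximizer
`w` of `⟪s, ·⟫ - f` lies within `‖x* - w‖² ≤ 2ξ/μ` of the maximizer `x*`, so the exact
linearization at `x*` may be replaced by the one at `w` at the price of `2ξ`. Conversely, one
gradient step from `w` shows `f* s' ≥ ⟪s', w⟫ - f w + ‖s' - ∇f w‖² / (2L)`; applied at `s` it gives
`‖∇f w - s‖² ≤ 2Lξ`, and applied at `s'` it gives the lower bound.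
Finally `‖Aᵀ d‖² ≤ λ_max(AᵀA) ‖d‖²` for all `d`, and `‖Aᵀ d‖² ≥ λ_min⁺(AᵀA) ‖d‖²` for `d` in the
range of `A`, since `‖AᵀA v‖² ≥ λ_min⁺ ⟪AᵀA v, v⟫` eigenvalue by eigenvalue.
-/

namespace LinearMap

variable {E F : Type*} [NormedAddCommGroup E] [InnerProductSpace ℝ E] [FiniteDimensional ℝ E]
  [NormedAddCommGroup F] [InnerProductSpace ℝ F] [FiniteDimensional ℝ F]

section

variable {T : E →ₗ[ℝ] E}

theorem IsSymmetric.inner_map_self_eq_sum (hT : T.IsSymmetric) (v : E) :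
    ⟪T v, v⟫ = ∑ i, hT.eigenvalues rfl i * (hT.eigenvectorBasis rfl).repr v i ^ 2 := by
  rw [← (hT.eigenvectorBasis rfl).repr.inner_map_map, PiLp.inner_apply]
  simp [eigenvectorBasis_apply_self_apply, sq, mul_left_comm]

theorem IsSymmetric.norm_map_sq_eq_sum (hT : T.IsSymmetric) (v : E) :
    ‖T v‖ ^ 2 = ∑ i, (hT.eigenvalues rfl i * (hT.eigenvectorBasis rfl).repr v i) ^ 2 := by
  rw [← (hT.eigenvectorBasis rfl).repr.norm_map, EuclideanSpace.norm_sq_eq]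
  simp [eigenvectorBasis_apply_self_apply, mul_pow]

theorem IsSymmetric.norm_sq_eq_sum (hT : T.IsSymmetric) (v : E) :
    ‖v‖ ^ 2 = ∑ i, (hT.eigenvectorBasis rfl).repr v i ^ 2 := by
  rw [← (hT.eigenvectorBasis rfl).repr.norm_map, EuclideanSpace.norm_sq_eq]
  simp

theorem IsSymmetric.inner_map_self_le_sSup_spectrum_mul (hT : T.IsSymmetric) (v : E) :
    ⟪T v, v⟫ ≤ sSup (spectrum ℝ T) * ‖v‖ ^ 2 := by
  have hbdd : BddAbove (spectrum ℝ T) := (Module.End.finite_spectrum T).bddAbove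
  rw [hT.inner_map_self_eq_sum, hT.norm_sq_eq_sum, Finset.mul_sum]
  gcongr with i
  exact le_csSup hbdd (hT.hasEigenvalue_eigenvalues rfl i).mem_spectrum

theorem IsSymmetric.sInf_spectrum_pos_mul_inner_map_self_le (hT : T.IsSymmetric) (v : E) :
    sInf (spectrum ℝ T ∩ Set.Ioi 0) * ⟪T v, v⟫ ≤ ‖T v‖ ^ 2 := by
  set c := sInf (spectrum ℝ T ∩ Set.Ioi 0)
  have hc : 0 ≤ c := Real.sInf_nonneg fun r hr => hr.2.le
  rw [hT.inner_map_self_eq_sum, hT.norm_map_sq_eq_sum, Finset.mul_sum]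
  gcongr with i
  set ν := hT.eigenvalues rfl i
  have : c * ν ≤ ν ^ 2 := by
    rcases lt_trichotomy ν 0 with hν | hν | hν
    · nlinarith
    · simp [hν]
    · have : c ≤ ν := csInf_le ⟨0, fun r hr => hr.2.le⟩
        ⟨(hT.hasEigenvalue_eigenvalues rfl i).mem_spectrum, hν⟩
      nlinarith
  nlinarith [sq_nonneg ((hT.eigenvectorBasis rfl).repr v i)]

end

variable (T : E →ₗ[ℝ] F)

theorem sSup_spectrum_adjoint_comp_self_nonneg : 0 ≤ sSup (spectrum ℝ (T.adjoint ∘ₗ T)) :=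
  Real.sSup_nonneg fun _ hr => eigenvalue_nonneg_of_nonneg (𝕜 := ℝ)
    (Module.End.hasEigenvalue_iff_mem_spectrum.mpr hr)
    (isPositive_adjoint_comp_self T).re_inner_nonneg_right

theorem norm_apply_sq_le (v : E) :
    ‖T v‖ ^ 2 ≤ sSup (spectrum ℝ (T.adjoint ∘ₗ T)) * ‖v‖ ^ 2 := by
  simpa only [comp_apply, adjoint_inner_left, real_inner_self_eq_norm_sq] using
    (isSymmetric_adjoint_comp_self T).inner_map_self_le_sSup_spectrum_mul v

theorem norm_adjoint_apply_sq_le (u : F) :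
    ‖T.adjoint u‖ ^ 2 ≤ sSup (spectrum ℝ (T.adjoint ∘ₗ T)) * ‖u‖ ^ 2 := by
  set M := sSup (spectrum ℝ (T.adjoint ∘ₗ T))
  have hcs : ‖T.adjoint u‖ ^ 2 ≤ ‖T (T.adjoint u)‖ * ‖u‖ := by
    rw [← real_inner_self_eq_norm_sq (T.adjoint u), adjoint_inner_left]
    exact (real_inner_le_norm _ _).trans_eq (mul_comm _ _)
  have hTa := norm_apply_sq_le T (T.adjoint u)
  rcases (sq_nonneg ‖T.adjoint u‖).eq_or_lt with ha | ha
  · rw [← ha]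
    exact mul_nonneg (sSup_spectrum_adjoint_comp_self_nonneg T) (sq_nonneg _)
  · refine le_of_mul_le_mul_right ?_ ha
    calc ‖T.adjoint u‖ ^ 2 * ‖T.adjoint u‖ ^ 2 ≤ (‖T (T.adjoint u)‖ * ‖u‖) ^ 2 := by
          rw [← sq]; gcongr
      _ = ‖T (T.adjoint u)‖ ^ 2 * ‖u‖ ^ 2 := by ring
      _ ≤ M * ‖T.adjoint u‖ ^ 2 * ‖u‖ ^ 2 := by gcongr
      _ = M * ‖u‖ ^ 2 * ‖T.adjoint u‖ ^ 2 := by ring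

theorem sInf_mul_norm_sq_le_norm_adjoint_apply_sq {u : F} (hu : u ∈ range T) :
    sInf (spectrum ℝ (T.adjoint ∘ₗ T) ∩ Set.Ioi 0) * ‖u‖ ^ 2 ≤ ‖T.adjoint u‖ ^ 2 := by
  obtain ⟨v, rfl⟩ := hu
  simpa only [comp_apply, adjoint_inner_left, real_inner_self_eq_norm_sq] using
    (isSymmetric_adjoint_comp_self T).sInf_spectrum_pos_mul_inner_map_self_le v

end LinearMap

namespace Matrix

variable {m n : Type*} [Fintype m] [Fintype n] [DecidableEq m] [DecidableEq n] (A : Matrix m n ℝ)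

theorem toEuclideanLin_transpose_eq_adjoint : toEuclideanLin Aᵀ = (toEuclideanLin A).adjoint := by
  rw [← toEuclideanLin_conjTranspose_eq_adjoint, conjTranspose_eq_transpose_of_trivial]

theorem spectrum_transpose_mul_self :
    spectrum ℝ (Aᵀ * A) = spectrum ℝ ((toEuclideanLin A).adjoint ∘ₗ toEuclideanLin A) := by
  rw [← spectrum_toLpLin 2, toLpLin_mul_same, ← toEuclideanLin_transpose_eq_adjoint]

end Matrix

section

variable {E : Type*} [NormedAddCommGroup E] [InnerProductSpace ℝ E]

theorem inner_sub_half_mul_norm_sq_le {μ : ℝ} (hμ : 0 < μ) (a b : E) :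
    ⟪a, b⟫ - μ / 2 * ‖b‖ ^ 2 ≤ ‖a‖ ^ 2 / (2 * μ) := by
  have h := norm_sub_sq_real a (μ • b)
  rw [norm_smul, real_inner_smul_right, Real.norm_of_nonneg hμ.le] at h
  rw [le_div_iff₀ (by positivity)]
  nlinarith [sq_nonneg ‖a - μ • b‖]

variable [CompleteSpace E] {f : E → ℝ}

theorem gradient_eq_of_isMaxOn_inner_sub {s x : E} (hf : DifferentiableAt ℝ f x)
    (hx : IsMaxOn (fun z => ⟪s, z⟫ - f z) Set.univ x) : gradient f x = s := by
  have hderiv : HasFDerivAt (fun z => ⟪s, z⟫ - f z)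
      (InnerProductSpace.toDual ℝ E (s - gradient f x)) x := by
    rw [map_sub]
    exact (innerSL ℝ s).hasFDerivAt.sub hf.hasGradientAt.hasFDerivAt
  have h0 := (hx.isLocalMax Filter.univ_mem).hasFDerivAt_eq_zero hderiv
  rw [LinearIsometryEquiv.map_eq_zero_iff, sub_eq_zero] at h0
  exact h0.symm

theorem descent_lemma {L : ℝ} (hdiff : Differentiable ℝ f)
    (hsmooth : ∀ x y, ‖gradient f x - gradient f y‖ ≤ L * ‖x - y‖) (x v : E) :
    f (x + v) ≤ f x + ⟪gradient f x, v⟫ + L / 2 * ‖v‖ ^ 2 := by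
  set φ := fun t : ℝ => f (x + t • v) - t * ⟪gradient f x, v⟫ - L / 2 * t ^ 2 * ‖v‖ ^ 2
  set φ' := fun t : ℝ => ⟪gradient f (x + t • v) - gradient f x, v⟫ - L * t * ‖v‖ ^ 2
  have hderiv : ∀ t, HasDerivAt φ (φ' t) t := by
    intro t
    have hline : HasDerivAt (fun t : ℝ => x + t • v) v t := by
      simpa using ((hasDerivAt_id t).smul_const v).const_add x
    have hf := (hdiff (x + t • v)).hasGradientAt.hasFDerivAt.comp_hasDerivAt t hline
    have := ((hf.sub ((hasDerivAt_id t).mul_const ⟪gradient f x, v⟫)).sub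
      (((hasDerivAt_pow 2 t).const_mul (L / 2)).mul_const (‖v‖ ^ 2)))
    exact this.congr_deriv
      (by simp only [φ', InnerProductSpace.toDual_apply_apply, inner_sub_left]; ring)
  have hφ'_nonpos : ∀ t ∈ interior (Set.Ici (0 : ℝ)), φ' t ≤ 0 := by
    intro t ht
    rw [interior_Ici] at ht
    have hlip := hsmooth (x + t • v) x
    rw [add_sub_cancel_left, norm_smul, Real.norm_of_nonneg ht.le] at hlip
    have hcs := real_inner_le_norm (gradient f (x + t • v) - gradient f x) v
    have : ‖gradient f (x + t • v) - gradient f x‖ * ‖v‖ ≤ L * t * ‖v‖ ^ 2 := by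
      nlinarith [norm_nonneg v]
    simp only [φ']
    linarith
  have hanti := antitoneOn_of_hasDerivWithinAt_nonpos (convex_Ici 0)
    (fun t _ => (hderiv t).continuousAt.continuousWithinAt)
    (fun t _ => (hderiv t).hasDerivWithinAt) hφ'_nonpos
  have h10 := hanti Set.self_mem_Ici (Set.mem_Ici.mpr zero_le_one) zero_le_one
  simp only [φ, zero_smul, add_zero, one_smul, zero_mul, one_mul] at h10
  linarith

theorem inner_sub_add_norm_sq_div_le_of_isMaxOn {L : ℝ} (hL : 0 < L) (hdiff : Differentiable ℝ f)
    (hsmooth : ∀ x y, ‖gradient f x - gradient f y‖ ≤ L * ‖x - y‖) {s x : E}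
    (hx : IsMaxOn (fun z => ⟪s, z⟫ - f z) Set.univ x) (w : E) :
    ⟪s, w⟫ - f w + ‖s - gradient f w‖ ^ 2 / (2 * L) ≤ ⟪s, x⟫ - f x := by
  set u := s - gradient f w
  have hstep := descent_lemma hdiff hsmooth w (L⁻¹ • u)
  have hmax := isMaxOn_univ_iff.mp hx (w + L⁻¹ • u)
  have hu : ⟪s, L⁻¹ • u⟫ - ⟪gradient f w, L⁻¹ • u⟫ = L⁻¹ * ‖u‖ ^ 2 := by
    rw [← inner_sub_left, real_inner_smul_right, real_inner_self_eq_norm_sq]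
  rw [norm_smul, Real.norm_of_nonneg (inv_nonneg.mpr hL.le), mul_pow] at hstep
  rw [inner_add_right] at hmax
  have hgain : ‖u‖ ^ 2 / (2 * L) = L⁻¹ * ‖u‖ ^ 2 - L / 2 * (L⁻¹ ^ 2 * ‖u‖ ^ 2) := by
    field_simp
    ring
  linarith

theorem inexact_oracle_upper {μ : ℝ} (hμ : 0 < μ)
    (hsc : ∀ x y, f x + ⟪gradient f x, y - x⟫ + μ / 2 * ‖y - x‖ ^ 2 ≤ f y)
    {s x w : E} {ξ : ℝ} (hx : gradient f x = s) (hw : ⟪s, x⟫ - f x - (⟪s, w⟫ - f w) ≤ ξ)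
    (s' z : E) :
    ⟪s', z⟫ - f z - (⟪s, w⟫ - f w - ξ + ⟪w, s' - s⟫) ≤ ‖s' - s‖ ^ 2 / μ + 3 * ξ := by
  have hz := hsc x z
  have hw' := hsc x w
  rw [hx] at hz hw'
  have hconj : ⟪s', z⟫ - f z ≤ ⟪s, x⟫ - f x + ⟪s' - s, x⟫ + ‖s' - s‖ ^ 2 / (2 * μ) := by
    have := inner_sub_half_mul_norm_sq_le hμ (s' - s) (z - x)
    simp only [inner_sub_left, inner_sub_right] at this hz ⊢
    linarith
  have hcross : ⟪s' - s, x - w⟫ ≤ ξ + ‖s' - s‖ ^ 2 / (2 * μ) := by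
    have := inner_sub_half_mul_norm_sq_le hμ (s' - s) (x - w)
    rw [norm_sub_rev w x, inner_sub_right] at hw'
    linarith
  have hhalf : ‖s' - s‖ ^ 2 / μ = 2 * (‖s' - s‖ ^ 2 / (2 * μ)) := by field_simp
  rw [inner_sub_right, real_inner_comm s' w, real_inner_comm s w]
  simp only [inner_sub_left, inner_sub_right] at hconj hcross
  linarith

theorem inexact_oracle_lower {L : ℝ} (hL : 0 < L) (hdiff : Differentiable ℝ f)
    (hsmooth : ∀ x y, ‖gradient f x - gradient f y‖ ≤ L * ‖x - y‖) {s x w : E} {ξ : ℝ}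
    (hx : IsMaxOn (fun z => ⟪s, z⟫ - f z) Set.univ x) (hw : ⟪s, x⟫ - f x - (⟪s, w⟫ - f w) ≤ ξ)
    {s' x' : E} (hx' : IsMaxOn (fun z => ⟪s', z⟫ - f z) Set.univ x') :
    ‖s' - s‖ ^ 2 / (4 * L) ≤ ⟪s', x'⟫ - f x' - (⟪s, w⟫ - f w - ξ + ⟪w, s' - s⟫) := by
  have hgap := inner_sub_add_norm_sq_div_le_of_isMaxOn hL hdiff hsmooth hx w
  have hgain := inner_sub_add_norm_sq_div_le_of_isMaxOn hL hdiff hsmooth hx' w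
  have hsplit : ‖s' - s‖ ^ 2 / (4 * L) ≤
      ‖s' - gradient f w‖ ^ 2 / (2 * L) + ‖s - gradient f w‖ ^ 2 / (2 * L) := by
    rw [← add_div, show 4 * L = 2 * (2 * L) by ring, ← div_div]
    gcongr
    have := parallelogram_law_with_norm ℝ (s' - gradient f w) (s - gradient f w)
    rw [sub_sub_sub_cancel_right] at this
    linarith [sq_nonneg ‖s' - gradient f w + (s - gradient f w)‖]
  rw [inner_sub_right, real_inner_comm s' w, real_inner_comm s w]
  linarith

end

theorem inexact_inner_max_gives_oracle_general
    {n p : ℕ} (f : EuclideanSpace ℝ (Fin n) → ℝ) (μ L : ℝ)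
    (hμ : 0 < μ) (hμL : μ ≤ L)
    (hdiff : Differentiable ℝ f)
    (hsc : ∀ x y : EuclideanSpace ℝ (Fin n),
      f x + ⟪gradient f x, y - x⟫ + μ / 2 * ‖y - x‖ ^ 2 ≤ f y)
    (hsmooth : ∀ x y : EuclideanSpace ℝ (Fin n),
      ‖gradient f x - gradient f y‖ ≤ L * ‖x - y‖)
    (A : Matrix (Fin p) (Fin n) ℝ)
    (Ψ : EuclideanSpace ℝ (Fin n) → EuclideanSpace ℝ (Fin p) → ℝ)
    (hΨ : ∀ x y, Ψ x y = ⟪Matrix.toEuclideanLin Aᵀ y, x⟫ - f x)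
    (xstar : EuclideanSpace ℝ (Fin p) → EuclideanSpace ℝ (Fin n))
    (hxstar : ∀ y, IsMaxOn (fun x => Ψ x y) Set.univ (xstar y))
    (φ : EuclideanSpace ℝ (Fin p) → ℝ)
    (hφ : ∀ y, φ y = Ψ (xstar y) y)
    (Lφ μφ : ℝ)
    (hLφ : Lφ = sSup (spectrum ℝ (Aᵀ * A)) / μ)
    (hμφ : μφ = sInf (spectrum ℝ (Aᵀ * A) ∩ Set.Ioi 0) / L)
    (y : EuclideanSpace ℝ (Fin p)) (ξ : ℝ)
    (w : EuclideanSpace ℝ (Fin n))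
    (hw : Ψ (xstar y) y - Ψ w y ≤ ξ) :
    (∀ y' : EuclideanSpace ℝ (Fin p),
      φ y' - ((Ψ w y - ξ) + ⟪Matrix.toEuclideanLin A w, y' - y⟫) ≤ Lφ * ‖y' - y‖ ^ 2 + 3 * ξ) ∧
    (∀ y' : EuclideanSpace ℝ (Fin p), y' - y ∈ LinearMap.range (Matrix.toEuclideanLin A) →
      μφ / 4 * ‖y' - y‖ ^ 2 ≤ φ y' - ((Ψ w y - ξ) + ⟪Matrix.toEuclideanLin A w, y' - y⟫)) := by
  have hL : 0 < L := hμ.trans_le hμL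
  set T := toEuclideanLin A
  have hAt : toEuclideanLin Aᵀ = T.adjoint := toEuclideanLin_transpose_eq_adjoint A
  have hmax : ∀ y, IsMaxOn (fun x => ⟪T.adjoint y, x⟫ - f x) Set.univ (xstar y) := fun y => by
    simpa only [hΨ, hAt] using hxstar y
  have hgap : ⟪T.adjoint y, xstar y⟫ - f (xstar y) - (⟪T.adjoint y, w⟫ - f w) ≤ ξ := by
    simpa only [hΨ, hAt] using hw
  have hpair : ∀ y', ⟪T w, y' - y⟫ = ⟪w, T.adjoint y' - T.adjoint y⟫ := fun y' => by
    rw [← map_sub, LinearMap.adjoint_inner_right]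
  rw [spectrum_transpose_mul_self] at hLφ hμφ
  simp only [hφ, hΨ, hAt, hpair]
  refine ⟨fun y' => ?_, fun y' hy' => ?_⟩
  · have hspec := T.norm_adjoint_apply_sq_le (y' - y)
    rw [map_sub] at hspec
    calc _ ≤ ‖T.adjoint y' - T.adjoint y‖ ^ 2 / μ + 3 * ξ :=
          inexact_oracle_upper hμ hsc (gradient_eq_of_isMaxOn_inner_sub (hdiff _) (hmax y)) hgap
            (T.adjoint y') (xstar y')
      _ ≤ Lφ * ‖y' - y‖ ^ 2 + 3 * ξ := by rw [hLφ, div_mul_eq_mul_div]; gcongr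
  · have hspec := T.sInf_mul_norm_sq_le_norm_adjoint_apply_sq hy'
    rw [map_sub] at hspec
    calc μφ / 4 * ‖y' - y‖ ^ 2 ≤ ‖T.adjoint y' - T.adjoint y‖ ^ 2 / (4 * L) := by
          rw [hμφ, div_div, mul_comm L 4, div_mul_eq_mul_div]; gcongr
      _ ≤ _ := inexact_oracle_lower hL hdiff hsmooth (hmax y) hgap (hmax y')

/-- An `ξ`-approximate maximizer of the inner problem `Ψ(·,y)` yields a
`(3ξ, 2L_φ, μ_φ/2)`-oracle for the dual function `φ` at `y`. -/
theorem inexact_inner_max_gives_oracle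
    {n p : ℕ} (f : EuclideanSpace ℝ (Fin n) → ℝ) (μ L : ℝ)
    (hμ : 0 < μ) (hμL : μ ≤ L)
    (hdiff : Differentiable ℝ f)
    (hsc : ∀ x y : EuclideanSpace ℝ (Fin n),
      f x + ⟪gradient f x, y - x⟫ + μ / 2 * ‖y - x‖ ^ 2 ≤ f y)
    (hsmooth : ∀ x y : EuclideanSpace ℝ (Fin n),
      ‖gradient f x - gradient f y‖ ≤ L * ‖x - y‖)
    (A : Matrix (Fin p) (Fin n) ℝ)
    (Ψ : EuclideanSpace ℝ (Fin n) → EuclideanSpace ℝ (Fin p) → ℝ)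
    (hΨ : ∀ x y, Ψ x y = ⟪Matrix.toEuclideanLin Aᵀ y, x⟫ - f x)
    (xstar : EuclideanSpace ℝ (Fin p) → EuclideanSpace ℝ (Fin n))
    (hxstar : ∀ y, IsMaxOn (fun x => Ψ x y) Set.univ (xstar y))
    (hxstar_uniq : ∀ y x', IsMaxOn (fun x => Ψ x y) Set.univ x' → x' = xstar y)
    (φ : EuclideanSpace ℝ (Fin p) → ℝ)
    (hφ : ∀ y, φ y = Ψ (xstar y) y)
    (Lφ μφ : ℝ)
    (hLφ : Lφ = sSup (spectrum ℝ (Aᵀ * A)) / μ)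
    (hμφ : μφ = sInf (spectrum ℝ (Aᵀ * A) ∩ Set.Ioi 0) / L)
    (y : EuclideanSpace ℝ (Fin p)) (ξ : ℝ) (hξ : 0 < ξ)
    (w : EuclideanSpace ℝ (Fin n))
    (hw : Ψ (xstar y) y - Ψ w y ≤ ξ) :
    (∀ y' : EuclideanSpace ℝ (Fin p),
      φ y' - ((Ψ w y - ξ) + ⟪Matrix.toEuclideanLin A w, y' - y⟫) ≤ Lφ * ‖y' - y‖ ^ 2 + 3 * ξ) ∧
    (∀ y' : EuclideanSpace ℝ (Fin p), y' - y ∈ LinearMap.range (Matrix.toEuclideanLin A) →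
      μφ / 4 * ‖y' - y‖ ^ 2 ≤ φ y' - ((Ψ w y - ξ) + ⟪Matrix.toEuclideanLin A w, y' - y⟫)) :=
  inexact_inner_max_gives_oracle_general f μ L hμ hμL hdiff hsc hsmooth A Ψ hΨ xstar hxstar φ hφ Lφ
    μφ hLφ hμφ y ξ w hw
end

section
/- Let f : ℝ^d → ℝ be μ-strongly convex and L-smooth with 0 < μ ≤ L, with minimizer x* and minimum value f*. Define Nesterov's constant step scheme II: choose x₀ ∈ ℝ^d and α₀ ∈ (0,1) satisfying L(1 − α₀) = α₀(α₀L − μ), set y₀ = x₀ and q = μ/L, and for k ≥ 0: x_{k+1} = y_k − (1/L)∇f(y_k); let α_{k+1} ∈ (0,1) be the root of α_{k+1}² = (1 − α_{k+1})α_k² + q·α_{k+1}; β_k = α_k(1 − α_k)/(α_k² + α_{k+1}); y_{k+1} = x_{k+1} + β_k(x_{k+1} − x_k). Then for every k ≥ 0, f(x_k) − f* ≤ L·(1 − √(μ/L))^k·‖x₀ − x*‖₂². -/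
open RealInnerProductSpace

/-!
With `γ₀ = L`, `γ_{k+1} = L α_k²`, `v₀ = x₀` and `v_{k+1} = x_k + α_k⁻¹ (x_{k+1} - x_k)`, the choice
of `β_k` makes `y_k` the weighted average `(γ_k + α_k μ) y_k = α_k γ_k v_k + γ_{k+1} x_k`, i.e. the
scheme is Nesterov's estimate-sequence method with centers `v_k`. The Lyapunov function
`Φ_k = f x_k - f* + γ_k / 2 ‖v_k - x*‖²` then satisfies `Φ_{k+1} ≤ (1 - α_k) Φ_k`: combine the
descent lemma for the gradient step with strong convexity at `y_k` towards `x_k` and `x*`, and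
Jensen's inequality for `‖·‖²`. Since `γ_k` stays above `μ`, `α_k ≥ √(μ/L)`, and finally
`Φ₀ ≤ L ‖x₀ - x*‖²` because `∇f x* = 0`.
-/

section Smooth

variable {E : Type*} [NormedAddCommGroup E] [InnerProductSpace ℝ E] [CompleteSpace E]
  {f : E → ℝ} {L : ℝ}

theorem le_add_inner_gradient_add_sq_of_lipschitz_gradient (hf : Differentiable ℝ f)
    (hLip : ∀ x y, ‖gradient f x - gradient f y‖ ≤ L * ‖x - y‖) (x v : E) :
    f (x + v) ≤ f x + ⟪gradient f x, v⟫ + L / 2 * ‖v‖ ^ 2 := by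
  -- `f (x + t v)` minus its claimed majorant is antitone in `t ∈ [0, 1]`.
  let φ : ℝ → ℝ := fun t => f (x + t • v) - t * ⟪gradient f x, v⟫ - t ^ 2 * (L / 2 * ‖v‖ ^ 2)
  have hφ' : ∀ t, HasDerivAt φ
      (⟪gradient f (x + t • v), v⟫ - ⟪gradient f x, v⟫ - 2 * t * (L / 2 * ‖v‖ ^ 2)) t := by
    intro t
    have hline : HasDerivAt (fun t : ℝ => x + t • v) v t := by
      simpa using ((hasDerivAt_id t).smul_const v).const_add x
    have hcomp := (hf (x + t • v)).hasGradientAt.hasFDerivAt.comp_hasDerivAt t hline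
    have hsq : HasDerivAt (fun t : ℝ => t ^ 2 * (L / 2 * ‖v‖ ^ 2))
        (2 * t * (L / 2 * ‖v‖ ^ 2)) t := by
      simpa using (hasDerivAt_pow 2 t).mul_const (L / 2 * ‖v‖ ^ 2)
    exact (hcomp.sub (hasDerivAt_mul_const ⟪gradient f x, v⟫)).sub hsq
  have hanti : AntitoneOn φ (Set.Icc 0 1) := by
    refine antitoneOn_of_hasDerivWithinAt_nonpos (convex_Icc 0 1)
      (fun t _ => (hφ' t).continuousAt.continuousWithinAt)
      (fun t _ => (hφ' t).hasDerivWithinAt) fun t ht => ?_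
    rw [interior_Icc] at ht
    have hgrad : ⟪gradient f (x + t • v) - gradient f x, v⟫ ≤ L * t * ‖v‖ ^ 2 :=
      calc ⟪gradient f (x + t • v) - gradient f x, v⟫
          ≤ ‖gradient f (x + t • v) - gradient f x‖ * ‖v‖ := real_inner_le_norm _ _
        _ ≤ L * ‖x + t • v - x‖ * ‖v‖ := by gcongr; exact hLip _ _
        _ = L * t * ‖v‖ ^ 2 := by
          rw [add_sub_cancel_left, norm_smul, Real.norm_of_nonneg ht.1.le]; ring
    rw [inner_sub_left] at hgrad
    linarith
  have h01 := hanti (by simp) (by simp) zero_le_one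
  simp only [φ, zero_smul, add_zero, one_smul, zero_mul, sub_zero, one_mul, one_pow,
    ne_eq, OfNat.ofNat_ne_zero, not_false_eq_true, zero_pow] at h01
  linarith

theorem apply_sub_inv_smul_gradient_le (hf : Differentiable ℝ f)
    (hLip : ∀ x y, ‖gradient f x - gradient f y‖ ≤ L * ‖x - y‖) (hL : 0 < L) (x : E) :
    f (x - L⁻¹ • gradient f x) ≤ f x - ‖gradient f x‖ ^ 2 / (2 * L) := by
  calc f (x - L⁻¹ • gradient f x)
      ≤ f x + ⟪gradient f x, -(L⁻¹ • gradient f x)⟫ + L / 2 * ‖-(L⁻¹ • gradient f x)‖ ^ 2 := by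
        simpa [sub_eq_add_neg] using
          le_add_inner_gradient_add_sq_of_lipschitz_gradient hf hLip x (-(L⁻¹ • gradient f x))
    _ = f x - ‖gradient f x‖ ^ 2 / (2 * L) := by
        rw [inner_neg_right, norm_neg, real_inner_smul_right, real_inner_self_eq_norm_sq,
          norm_smul, Real.norm_of_nonneg (inv_nonneg.2 hL.le)]
        field_simp
        ring

theorem IsLocalMin.gradient_eq_zero {a : E} (h : IsLocalMin f a) : gradient f a = 0 := by
  rw [gradient, h.fderiv_eq_zero, map_zero]

end Smooth

section LyapunovStep

variable {E : Type*} [NormedAddCommGroup E] [InnerProductSpace ℝ E]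
  {μ L α γ : ℝ} {g x y v x' v' z : E}

theorem norm_smul_add_smul_sq_le {a b : ℝ} (ha : 0 ≤ a) (hb : 0 ≤ b) (u w : E) :
    ‖a • u + b • w‖ ^ 2 ≤ (a + b) * (a * ‖u‖ ^ 2 + b * ‖w‖ ^ 2) := by
  have h : (a + b) * (a * ‖u‖ ^ 2 + b * ‖w‖ ^ 2) - ‖a • u + b • w‖ ^ 2 = a * b * ‖u - w‖ ^ 2 := by
    rw [norm_add_sq_real, norm_sub_sq_real, norm_smul, norm_smul, real_inner_smul_left,
      real_inner_smul_right, Real.norm_of_nonneg ha, Real.norm_of_nonneg hb]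
    ring
  nlinarith [mul_nonneg (mul_nonneg ha hb) (sq_nonneg ‖u - w‖)]

theorem smul_center_succ_sub_eq (hα : α ≠ 0) (hL : L ≠ 0)
    (hγ : L * α ^ 2 = (1 - α) * γ + α * μ)
    (hy : (γ + α * μ) • y = (α * γ) • v + (L * α ^ 2) • x)
    (hx' : x' = y - L⁻¹ • g) (hv' : v' = x + α⁻¹ • (x' - x)) (z : E) :
    (L * α ^ 2) • (v' - z) = ((1 - α) * γ) • (v - z) + (α * μ) • (y - z) - α • g := by
  subst hx' hv'
  linear_combination (norm := skip) ((1 - α) / α) • hy + hγ • (α⁻¹ • y - z)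
  match_scalars <;> field_simp <;> ring

theorem smul_center_combination_eq (hγ : L * α ^ 2 = (1 - α) * γ + α * μ)
    (hy : (γ + α * μ) • y = (α * γ) • v + (L * α ^ 2) • x) (z : E) :
    α • (((1 - α) * γ) • (v - z) + (α * μ) • (y - z)) =
      (L * α ^ 2) • (y - ((1 - α) • x + α • z)) := by
  linear_combination (norm := module) (α - 1) • hy + hγ • (α • z - y)

theorem mul_norm_center_succ_sub_sq_le (hα : α ∈ Set.Ioo 0 1) (hL : 0 < L) (hγ0 : 0 ≤ γ)
    (hμ : 0 ≤ μ) (hγ : L * α ^ 2 = (1 - α) * γ + α * μ)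
    (hy : (γ + α * μ) • y = (α * γ) • v + (L * α ^ 2) • x)
    (hx' : x' = y - L⁻¹ • g) (hv' : v' = x + α⁻¹ • (x' - x)) (z : E) :
    L * α ^ 2 * ‖v' - z‖ ^ 2 ≤ (1 - α) * γ * ‖v - z‖ ^ 2 + α * μ * ‖y - z‖ ^ 2
      - 2 * ⟪g, y - ((1 - α) • x + α • z)⟫ + ‖g‖ ^ 2 / L := by
  obtain ⟨hα0, hα1⟩ := hα
  set P := ((1 - α) * γ) • (v - z) + (α * μ) • (y - z)
  have hcenter := smul_center_succ_sub_eq hα0.ne' hL.ne' hγ hy hx' hv' z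
  have hcross : α * ⟪P, g⟫ = L * α ^ 2 * ⟪g, y - ((1 - α) • x + α • z)⟫ := by
    rw [← real_inner_smul_left, smul_center_combination_eq hγ hy z, real_inner_smul_left,
      real_inner_comm]
  have hP : ‖P‖ ^ 2 ≤ L * α ^ 2 * ((1 - α) * γ * ‖v - z‖ ^ 2 + α * μ * ‖y - z‖ ^ 2) := by
    rw [hγ]
    exact norm_smul_add_smul_sq_le (mul_nonneg (sub_nonneg.2 hα1.le) hγ0)
      (mul_nonneg hα0.le hμ) (v - z) (y - z)
  have hLα : 0 < L * α ^ 2 := by positivity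
  refine le_of_mul_le_mul_left ?_ hLα
  calc L * α ^ 2 * (L * α ^ 2 * ‖v' - z‖ ^ 2) = ‖(L * α ^ 2) • (v' - z)‖ ^ 2 := by
        rw [norm_smul, Real.norm_of_nonneg hLα.le]; ring
    _ = ‖P‖ ^ 2 - 2 * (α * ⟪P, g⟫) + α ^ 2 * ‖g‖ ^ 2 := by
        rw [hcenter, norm_sub_sq_real, norm_smul, real_inner_smul_right,
          Real.norm_of_nonneg hα0.le]
        ring
    _ ≤ _ := by
        rw [hcross]
        field_simp
        linarith [hP]

theorem lyapunov_step_le {f : E → ℝ} (hα : α ∈ Set.Ioo 0 1) (hL : 0 < L) (hγ0 : 0 ≤ γ)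
    (hμ : 0 ≤ μ) (hγ : L * α ^ 2 = (1 - α) * γ + α * μ)
    (hy : (γ + α * μ) • y = (α * γ) • v + (L * α ^ 2) • x)
    (hx' : x' = y - L⁻¹ • g) (hv' : v' = x + α⁻¹ • (x' - x))
    (hdescent : f x' ≤ f y - ‖g‖ ^ 2 / (2 * L))
    (hconvex_x : f y + ⟪g, x - y⟫ ≤ f x)
    (hconvex_z : f y + ⟪g, z - y⟫ + μ / 2 * ‖z - y‖ ^ 2 ≤ f z) :
    f x' - f z + L * α ^ 2 / 2 * ‖v' - z‖ ^ 2 ≤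
      (1 - α) * (f x - f z + γ / 2 * ‖v - z‖ ^ 2) := by
  have hcenter := mul_norm_center_succ_sub_sq_le hα hL hγ0 hμ hγ hy hx' hv' z
  have hinner : ⟪g, y - ((1 - α) • x + α • z)⟫ = -((1 - α) * ⟪g, x - y⟫ + α * ⟪g, z - y⟫) := by
    simp only [inner_sub_right, inner_add_right, real_inner_smul_right]
    ring
  have hx := mul_le_mul_of_nonneg_left hconvex_x (sub_nonneg.2 hα.2.le)
  have hz := mul_le_mul_of_nonneg_left hconvex_z hα.1.le
  rw [norm_sub_rev] at hz
  rw [hinner] at hcenter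
  have hhalf : ‖g‖ ^ 2 / (2 * L) = ‖g‖ ^ 2 / L / 2 := by ring
  linarith

end LyapunovStep

section Scheme

variable {E : Type*} [NormedAddCommGroup E] [InnerProductSpace ℝ E]

noncomputable def nesterovGamma (L : ℝ) (α : ℕ → ℝ) : ℕ → ℝ
  | 0 => L
  | k + 1 => L * α k ^ 2

noncomputable def nesterovCenter (x : ℕ → E) (α : ℕ → ℝ) : ℕ → E
  | 0 => x 0
  | k + 1 => x k + (α k)⁻¹ • (x (k + 1) - x k)

variable {μ L : ℝ} {α : ℕ → ℝ}

theorem nesterovGamma_succ_eq (hL : L ≠ 0) (hα0 : L * (1 - α 0) = α 0 * (α 0 * L - μ))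
    (hα : ∀ k, α (k + 1) ^ 2 = (1 - α (k + 1)) * α k ^ 2 + μ / L * α (k + 1)) :
    ∀ k, nesterovGamma L α (k + 1) = (1 - α k) * nesterovGamma L α k + α k * μ
  | 0 => by
    simp only [nesterovGamma]
    linear_combination -hα0
  | k + 1 => by
    have h := hα k
    field_simp at h
    simp only [nesterovGamma]
    linear_combination h

theorem le_nesterovGamma (hμL : μ ≤ L) (hα : ∀ k, α k ∈ Set.Ioo 0 1)
    (hγ : ∀ k, nesterovGamma L α (k + 1) = (1 - α k) * nesterovGamma L α k + α k * μ) :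
    ∀ k, μ ≤ nesterovGamma L α k
  | 0 => hμL
  | k + 1 => by
    have := mul_nonneg (sub_nonneg.2 (hα k).2.le) (sub_nonneg.2 (le_nesterovGamma hμL hα hγ k))
    rw [hγ]
    linarith

theorem nesterov_weighted_y_eq {x y : ℕ → E} (hα : ∀ k, α k ∈ Set.Ioo 0 1)
    (hγ : ∀ k, nesterovGamma L α (k + 1) = (1 - α k) * nesterovGamma L α k + α k * μ)
    (hy0 : y 0 = x 0)
    (hy : ∀ k, y (k + 1) = x (k + 1) +
      (α k * (1 - α k) / (α k ^ 2 + α (k + 1))) • (x (k + 1) - x k)) :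
    ∀ k, (nesterovGamma L α k + α k * μ) • y k =
      (α k * nesterovGamma L α k) • nesterovCenter x α k + nesterovGamma L α (k + 1) • x k
  | 0 => by
    have h := hγ 0
    simp only [nesterovGamma, nesterovCenter, hy0] at h ⊢
    match_scalars
    linear_combination -h
  | k + 1 => by
    have h := hγ (k + 1)
    simp only [nesterovGamma, nesterovCenter, hy k] at h ⊢
    have := (hα k).1
    have := (hα (k + 1)).1
    match_scalars <;> field_simp
    · linear_combination (-α k - α (k + 1)) * h
    · linear_combination (1 - α k) * h

theorem sqrt_div_le_of_le_nesterovGamma_succ (hL : 0 < L) {k : ℕ} (hα : 0 ≤ α k)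
    (hμ : μ ≤ nesterovGamma L α (k + 1)) : √(μ / L) ≤ α k := by
  rw [Real.sqrt_le_iff, div_le_iff₀ hL]
  exact ⟨hα, by simpa only [nesterovGamma, mul_comm L] using hμ⟩

end Scheme

/-- **Nesterov's constant step scheme II** for a `μ`-strongly convex and `L`-smooth
function `f` on `ℝ^d`: `f (x k) - f* ≤ L * (1 - √(μ/L))^k * ‖x 0 - x*‖²`. -/
theorem nesterov_constant_step_scheme_II
    {d : ℕ} (f : EuclideanSpace ℝ (Fin d) → ℝ) (μ L : ℝ)
    (hμ : 0 < μ) (hμL : μ ≤ L)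
    (hdiff : Differentiable ℝ f)
    (hsc : ∀ x y : EuclideanSpace ℝ (Fin d),
      f x + ⟪gradient f x, y - x⟫ + μ / 2 * ‖y - x‖ ^ 2 ≤ f y)
    (hsmooth : ∀ x y : EuclideanSpace ℝ (Fin d),
      ‖gradient f x - gradient f y‖ ≤ L * ‖x - y‖)
    (xstar : EuclideanSpace ℝ (Fin d)) (hxstar : ∀ x, f xstar ≤ f x)
    (x y : ℕ → EuclideanSpace ℝ (Fin d)) (α : ℕ → ℝ)
    (hα0 : α 0 ∈ Set.Ioo (0 : ℝ) 1)
    (hα0eq : L * (1 - α 0) = α 0 * (α 0 * L - μ))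
    (hy0 : y 0 = x 0)
    (hx : ∀ k, x (k + 1) = y k - (1 / L) • gradient f (y k))
    (hα : ∀ k, α (k + 1) ∈ Set.Ioo (0 : ℝ) 1 ∧
      (α (k + 1)) ^ 2 = (1 - α (k + 1)) * (α k) ^ 2 + (μ / L) * α (k + 1))
    (hy : ∀ k, y (k + 1) = x (k + 1) +
      (α k * (1 - α k) / ((α k) ^ 2 + α (k + 1))) • (x (k + 1) - x k)) :
    ∀ k, f (x k) - f xstar ≤ L * (1 - Real.sqrt (μ / L)) ^ k * ‖x 0 - xstar‖ ^ 2 := by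
  have hL : 0 < L := hμ.trans_le hμL
  have hαmem : ∀ k, α k ∈ Set.Ioo 0 1
    | 0 => hα0
    | k + 1 => (hα k).1
  have hγ := nesterovGamma_succ_eq hL.ne' hα0eq fun k => (hα k).2
  have hγpos : ∀ k, 0 < nesterovGamma L α k := fun k =>
    hμ.trans_le (le_nesterovGamma hμL hαmem hγ k)
  have hrate : ∀ k, √(μ / L) ≤ α k := fun k =>
    sqrt_div_le_of_le_nesterovGamma_succ hL (hαmem k).1.le (le_nesterovGamma hμL hαmem hγ _)
  have hq : 0 ≤ 1 - √(μ / L) := by linarith [hrate 0, (hαmem 0).2]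
  set Φ : ℕ → ℝ := fun k =>
    f (x k) - f xstar + nesterovGamma L α k / 2 * ‖nesterovCenter x α k - xstar‖ ^ 2
  have hgap : ∀ k, f (x k) - f xstar ≤ Φ k := fun k =>
    le_add_of_nonneg_right (by have := hγpos k; positivity)
  have hstep : ∀ k, Φ (k + 1) ≤ (1 - √(μ / L)) * Φ k := fun k =>
    (lyapunov_step_le (hαmem k) hL (hγpos k).le hμ.le (hγ k)
      (nesterov_weighted_y_eq hαmem hγ hy0 hy k) (by rw [hx k, one_div]) rfl
      (by rw [hx k, one_div]; exact apply_sub_inv_smul_gradient_le hdiff hsmooth hL _)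
      (le_of_add_le_of_nonneg_left (hsc _ _) (by positivity)) (hsc _ _)).trans
    (mul_le_mul_of_nonneg_right (by linarith [hrate k])
      ((sub_nonneg.2 (hxstar _)).trans (hgap k)))
  have hΦ0 : Φ 0 ≤ L * ‖x 0 - xstar‖ ^ 2 := by
    have := le_add_inner_gradient_add_sq_of_lipschitz_gradient hdiff hsmooth xstar (x 0 - xstar)
    rw [IsLocalMin.gradient_eq_zero (Filter.Eventually.of_forall hxstar),
      inner_zero_left, add_zero, add_sub_cancel] at this
    simp only [Φ, nesterovGamma, nesterovCenter]
    linarith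
  intro k
  calc f (x k) - f xstar ≤ (1 - √(μ / L)) ^ k * Φ 0 :=
        (hgap k).trans (le_geom hq k fun j _ => hstep j)
    _ ≤ L * (1 - √(μ / L)) ^ k * ‖x 0 - xstar‖ ^ 2 := by
      rw [mul_comm L, mul_assoc]
      exact mul_le_mul_of_nonneg_left hΦ0 (pow_nonneg hq k)
end

section
/- Let f : ℝ^n → ℝ be continuous and μ-strongly convex with μ > 0, let A ∈ ℝ^{p×n}, and suppose the problem min_{Ax = 0} f(x) is feasible with optimal value f*. Fix y ∈ ℝ^p and let x_y = argmax_{x ∈ ℝ^n} {⟨A^T y, x⟩ − f(x)} (which exists and is unique). If ⟨y, A x_y⟩ ≤ ε and ‖A x_y‖₂ ≤ ε̃, then x_y is an (ε, ε̃)-solution of min_{Ax=0} f(x); in particular f(x_y) − f* ≤ ε. -/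
open RealInnerProductSpace Matrix

/-- If `⟨y, A x_y⟩ ≤ ε` and `‖A x_y‖ ≤ ε̃` for the maximizer `x_y` of `x ↦ ⟨Aᵀy, x⟩ - f(x)`,
then `x_y` is an `(ε, ε̃)`-solution of `min_{Ax=0} f(x)`. -/
theorem approx_solution_from_dual_gradient
    {n p : ℕ} (f : EuclideanSpace ℝ (Fin n) → ℝ) (μ : ℝ) (hμ : 0 < μ)
    (hcont : Continuous f) (hsc : StrongConvexOn Set.univ μ f)
    (A : Matrix (Fin p) (Fin n) ℝ)
    (xopt : EuclideanSpace ℝ (Fin n))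
    (hfeas : Matrix.toEuclideanLin A xopt = 0)
    (hopt : ∀ x, Matrix.toEuclideanLin A x = 0 → f xopt ≤ f x)
    (y : EuclideanSpace ℝ (Fin p)) (xy : EuclideanSpace ℝ (Fin n))
    (hxy : IsMaxOn (fun x => ⟪Matrix.toEuclideanLin Aᵀ y, x⟫ - f x) Set.univ xy)
    (ε εtil : ℝ)
    (h1 : ⟪y, Matrix.toEuclideanLin A xy⟫ ≤ ε)
    (h2 : ‖Matrix.toEuclideanLin A xy‖ ≤ εtil) :
    f xy - f xopt ≤ ε ∧ ‖Matrix.toEuclideanLin A xy‖ ≤ εtil := by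
  have key : ∀ x : EuclideanSpace ℝ (Fin n),
      ⟪Matrix.toEuclideanLin Aᵀ y, x⟫ = ⟪y, Matrix.toEuclideanLin A x⟫ := by
    intro x
    have hA : Aᵀ = Aᴴ := by ext i j; simp [Matrix.conjTranspose]
    rw [hA, Matrix.toEuclideanLin_conjTranspose_eq_adjoint, LinearMap.adjoint_inner_left]
  refine ⟨?_, h2⟩
  have hmax := hxy (Set.mem_univ xopt)
  simp only [Set.mem_setOf_eq] at hmax
  rw [key, key, hfeas, inner_zero_right] at hmax
  linarith
end

section
/- Let f : ℝ^n → ℝ be continuous and μ-strongly convex with μ > 0, and let A ∈ ℝ^{p×n}. For y ∈ ℝ^p, let x*(A^T y) = argmax_{x} {⟨A^T y, x⟩ − f(x)}. Then the map y ↦ A·x*(A^T y) is Lipschitz continuous with constant λ_max(A^T A)/μ: for all y₁, y₂ ∈ ℝ^p, ‖A·x*(A^T y₁) − A·x*(A^T y₂)‖₂ ≤ (λ_max(A^T A)/μ)·‖y₁ − y₂‖₂. Equivalently, the dual function φ(y) = max_x {⟨A^T y, x⟩ − f(x)} is (λ_max(A^T A)/μ)-smooth. -/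
open RealInnerProductSpace Matrix Filter Topology

/-!
Strong convexity makes `x ↦ ⟪c, x⟫ - f x` fall off quadratically away from its maximizer
`x*(c)`; adding this bound at two maximizers shows that `c ↦ x*(c)` is strongly monotone,
`μ ‖x*(c₁) - x*(c₂)‖² ≤ ⟪c₁ - c₂, x*(c₁) - x*(c₂)⟫`. For `cᵢ = Aᵀ yᵢ` and
`d = x*(c₁) - x*(c₂)` this reads `μ ‖d‖² ≤ ⟪y₁ - y₂, A d⟫ ≤ ‖y₁ - y₂‖ ‖A d‖`, while
`‖A d‖² = ⟪d, AᵀA d⟫ ≤ λ_max ‖d‖²` because `AᵀA ≤ λ_max • 1` in the Loewner order.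
Together, `μ ‖A d‖² ≤ λ_max ‖y₁ - y₂‖ ‖A d‖`.
-/

section StrongConvexity

variable {E : Type*} [NormedAddCommGroup E] {s : Set E} {μ : ℝ} {f : E → ℝ} {x₀ x : E}

theorem StrongConvexOn.add_mul_norm_sub_sq_le_of_isMinOn [NormedSpace ℝ E]
    (hf : StrongConvexOn s μ f) (hmin : IsMinOn f s x₀) (hx₀ : x₀ ∈ s) (hx : x ∈ s) :
    f x₀ + μ / 2 * ‖x - x₀‖ ^ 2 ≤ f x := by
  have hsegment : ∀ t ∈ Set.Ioo (0 : ℝ) 1, f x₀ + (1 - t) * (μ / 2 * ‖x - x₀‖ ^ 2) ≤ f x := by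
    intro t ⟨ht₀, ht₁⟩
    have h1t : 0 ≤ 1 - t := sub_nonneg.2 ht₁.le
    have hconv := hf.2 hx hx₀ ht₀.le h1t (add_sub_cancel t 1)
    have hle := isMinOn_iff.1 hmin _ (hf.1 hx hx₀ ht₀.le h1t (add_sub_cancel t 1))
    simp only [smul_eq_mul] at hconv
    refine le_of_mul_le_mul_left ?_ ht₀
    linarith
  have hlim : Tendsto (fun t : ℝ => f x₀ + (1 - t) * (μ / 2 * ‖x - x₀‖ ^ 2)) (𝓝[>] 0)
      (𝓝 (f x₀ + (1 - 0) * (μ / 2 * ‖x - x₀‖ ^ 2))) :=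
    (Continuous.tendsto (by fun_prop) 0).mono_left nhdsWithin_le_nhds
  simpa using le_of_tendsto hlim (eventually_of_mem (Ioo_mem_nhdsGT one_pos) hsegment)

variable [InnerProductSpace ℝ E]

theorem StrongConvexOn.sub_inner (hf : StrongConvexOn s μ f) (c : E) :
    StrongConvexOn s μ (fun x => f x - ⟪c, x⟫) := by
  have hlin : UniformConcaveOn s 0 (fun x => ⟪c, x⟫) :=
    uniformConcaveOn_zero.2 ((innerₛₗ ℝ c).concaveOn hf.1)
  simpa [StrongConvexOn, Pi.sub_def] using hf.sub hlin

theorem StrongConvexOn.add_inner_add_mul_norm_sub_sq_le_of_isMaxOn {c : E}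
    (hf : StrongConvexOn s μ f) (hmax : IsMaxOn (fun x => ⟪c, x⟫ - f x) s x₀) (hx₀ : x₀ ∈ s)
    (hx : x ∈ s) :
    f x₀ + ⟪c, x - x₀⟫ + μ / 2 * ‖x - x₀‖ ^ 2 ≤ f x := by
  have := (hf.sub_inner c).add_mul_norm_sub_sq_le_of_isMinOn (by simpa using hmax.neg) hx₀ hx
  rw [inner_sub_right]
  linarith

theorem StrongConvexOn.mul_norm_sub_sq_le_inner_of_isMaxOn {c₁ c₂ x₁ x₂ : E}
    (hf : StrongConvexOn s μ f) (h₁ : IsMaxOn (fun x => ⟪c₁, x⟫ - f x) s x₁)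
    (h₂ : IsMaxOn (fun x => ⟪c₂, x⟫ - f x) s x₂) (hx₁ : x₁ ∈ s) (hx₂ : x₂ ∈ s) :
    μ * ‖x₁ - x₂‖ ^ 2 ≤ ⟪c₁ - c₂, x₁ - x₂⟫ := by
  have h₁₂ := hf.add_inner_add_mul_norm_sub_sq_le_of_isMaxOn h₁ hx₁ hx₂
  have h₂₁ := hf.add_inner_add_mul_norm_sub_sq_le_of_isMaxOn h₂ hx₂ hx₁
  rw [norm_sub_rev, ← neg_sub, inner_neg_right] at h₁₂
  rw [inner_sub_left]
  linarith

end StrongConvexity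

namespace Matrix

open scoped MatrixOrder

variable {m n : Type*} [Fintype m] [Fintype n] [DecidableEq n]

theorem inner_toEuclideanLin_transpose [DecidableEq m] (A : Matrix m n ℝ)
    (y : EuclideanSpace ℝ m) (x : EuclideanSpace ℝ n) :
    ⟪toEuclideanLin Aᵀ y, x⟫ = ⟪y, toEuclideanLin A x⟫ := by
  rw [← conjTranspose_eq_transpose_of_trivial, toEuclideanLin_conjTranspose_eq_adjoint,
    LinearMap.adjoint_inner_left]

theorem IsHermitian.inner_toEuclideanLin_le {M : Matrix n n ℝ} (hM : M.IsHermitian)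
    (w : EuclideanSpace ℝ n) :
    ⟪w, toEuclideanLin M w⟫ ≤ sSup (spectrum ℝ M) * ‖w‖ ^ 2 := by
  have hle : M ≤ algebraMap ℝ _ (sSup (spectrum ℝ M)) :=
    le_algebraMap_of_spectrum_le (fun x hx => le_csSup finite_real_spectrum.bddAbove hx)
      hM.isSelfAdjoint
  have := (le_iff.1 hle).dotProduct_mulVec_nonneg w
  simp only [sub_mulVec, Algebra.algebraMap_eq_smul_one, smul_mulVec, one_mulVec, dotProduct_sub,
    dotProduct_smul, star_trivial, sub_nonneg, smul_eq_mul] at this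
  rwa [← real_inner_self_eq_norm_sq, EuclideanSpace.inner_eq_star_dotProduct,
    EuclideanSpace.inner_eq_star_dotProduct, ofLp_toLpLin, toLin'_apply, star_trivial,
    dotProduct_comm]

theorem sSup_spectrum_transpose_mul_self_nonneg (A : Matrix m n ℝ) :
    0 ≤ sSup (spectrum ℝ (Aᵀ * A)) := by
  have hA : (Aᵀ * A).PosSemidef := by
    simpa using posSemidef_conjTranspose_mul_self A
  exact Real.sSup_nonneg fun x hx => spectrum_nonneg_of_nonneg hA.nonneg hx

theorem norm_toEuclideanLin_sq_le [DecidableEq m] (A : Matrix m n ℝ) (w : EuclideanSpace ℝ n) :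
    ‖toEuclideanLin A w‖ ^ 2 ≤ sSup (spectrum ℝ (Aᵀ * A)) * ‖w‖ ^ 2 := by
  have hH : (Aᵀ * A).IsHermitian := by
    simpa using isHermitian_conjTranspose_mul_self A
  calc ‖toEuclideanLin A w‖ ^ 2 = ⟪w, toEuclideanLin (Aᵀ * A) w⟫ := by
        rw [toLpLin_mul_same, LinearMap.comp_apply, real_inner_comm,
          inner_toEuclideanLin_transpose, real_inner_self_eq_norm_sq]
    _ ≤ _ := hH.inner_toEuclideanLin_le w

end Matrix

theorem dual_gradient_lipschitz_general
    {n p : ℕ} (f : EuclideanSpace ℝ (Fin n) → ℝ) (μ : ℝ) (hμ : 0 < μ)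
    (hsc : StrongConvexOn Set.univ μ f)
    (A : Matrix (Fin p) (Fin n) ℝ)
    (xstar : EuclideanSpace ℝ (Fin p) → EuclideanSpace ℝ (Fin n))
    (hxstar : ∀ y, IsMaxOn (fun x => ⟪Matrix.toEuclideanLin Aᵀ y, x⟫ - f x) Set.univ
      (xstar y)) :
    ∀ y₁ y₂ : EuclideanSpace ℝ (Fin p),
      ‖Matrix.toEuclideanLin A (xstar y₁) - Matrix.toEuclideanLin A (xstar y₂)‖
        ≤ sSup (spectrum ℝ (Aᵀ * A)) / μ * ‖y₁ - y₂‖ := by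
  intro y₁ y₂
  set L := sSup (spectrum ℝ (Aᵀ * A))
  set d := xstar y₁ - xstar y₂
  set v := toEuclideanLin A d
  have hmono : μ * ‖d‖ ^ 2 ≤ ‖y₁ - y₂‖ * ‖v‖ := by
    refine le_trans ?_ (real_inner_le_norm _ _)
    rw [← inner_toEuclideanLin_transpose, map_sub]
    exact hsc.mul_norm_sub_sq_le_inner_of_isMaxOn (hxstar y₁) (hxstar y₂) trivial trivial
  have hL : 0 ≤ L := A.sSup_spectrum_transpose_mul_self_nonneg
  have key : μ * ‖v‖ * ‖v‖ ≤ L * ‖y₁ - y₂‖ * ‖v‖ := calc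
    μ * ‖v‖ * ‖v‖ = μ * ‖v‖ ^ 2 := by ring
    _ ≤ μ * (L * ‖d‖ ^ 2) := by gcongr; exact A.norm_toEuclideanLin_sq_le d
    _ = L * (μ * ‖d‖ ^ 2) := by ring
    _ ≤ L * (‖y₁ - y₂‖ * ‖v‖) := by gcongr
    _ = L * ‖y₁ - y₂‖ * ‖v‖ := by ring
  rw [← map_sub, div_mul_eq_mul_div, le_div_iff₀ hμ, mul_comm]
  rcases (norm_nonneg v).eq_or_lt with hv | hv
  · rw [← hv, mul_zero]; positivity
  · exact le_of_mul_le_mul_right key hv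

/-- For continuous `μ`-strongly convex `f`, the map `y ↦ A x*(Aᵀy)` (the gradient of the
dual function `φ(y) = max_x {⟨Aᵀy, x⟩ - f(x)}`) is Lipschitz with constant
`λ_max(AᵀA)/μ`; equivalently, `φ` is `λ_max(AᵀA)/μ`-smooth. -/
theorem dual_gradient_lipschitz
    {n p : ℕ} (f : EuclideanSpace ℝ (Fin n) → ℝ) (μ : ℝ) (hμ : 0 < μ)
    (hcont : Continuous f) (hsc : StrongConvexOn Set.univ μ f)
    (A : Matrix (Fin p) (Fin n) ℝ)
    (xstar : EuclideanSpace ℝ (Fin p) → EuclideanSpace ℝ (Fin n))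
    (hxstar : ∀ y, IsMaxOn (fun x => ⟪Matrix.toEuclideanLin Aᵀ y, x⟫ - f x) Set.univ
      (xstar y)) :
    ∀ y₁ y₂ : EuclideanSpace ℝ (Fin p),
      ‖Matrix.toEuclideanLin A (xstar y₁) - Matrix.toEuclideanLin A (xstar y₂)‖
        ≤ sSup (spectrum ℝ (Aᵀ * A)) / μ * ‖y₁ - y₂‖ :=
  dual_gradient_lipschitz_general f μ hμ hsc A xstar hxstar
end

section
/- Let f : ℝ^n → ℝ be convex, differentiable and L-smooth with L > 0, let A ∈ ℝ^{p×n}, and suppose that for every y ∈ ℝ^p the maximum φ(y) = max_x {⟨A^T y, x⟩ − f(x)} is attained at some point x*(A^T y). Then φ is (λ_min⁺(A^T A)/L)-strongly convex along the range of A: for all y₁, y₂ ∈ ℝ^p with y₁ − y₂ ∈ range(A), φ(y₁) ≥ φ(y₂) + ⟨A·x*(A^T y₂), y₁ − y₂⟩ + (λ_min⁺(A^T A)/(2L))·‖y₁ − y₂‖₂². -/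
/-!
At a maximiser `x₂ = x*(Aᵀy₂)` we have `∇f x₂ = Aᵀy₂`. Testing the maximisation that defines
`φ(y₁)` at the gradient step `x₂ + Aᵀ(y₁ - y₂) / L` and bounding `f` there by the descent lemma
gives the growth `‖Aᵀ(y₁ - y₂)‖² / (2L)`: the conjugate of an `L`-smooth function is
`1/L`-strongly convex. For `y₁ - y₂ = A u`, expanding in an eigenbasis of `AᵀA`, whose eigenvalues
are `0` or at least `λ_min⁺(AᵀA)`, gives `‖AᵀA u‖² ≥ λ_min⁺(AᵀA) ‖A u‖²`.
-/

open RealInnerProductSpace Matrix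

section Gradient

variable {F : Type*} [NormedAddCommGroup F] [InnerProductSpace ℝ F] [CompleteSpace F]
  {f : F → ℝ}

theorem IsLocalMax.gradient_eq_of_inner_sub {c x₀ : F} (hf : DifferentiableAt ℝ f x₀)
    (h : IsLocalMax (fun x => ⟪c, x⟫ - f x) x₀) : gradient f x₀ = c := by
  have hzero := h.hasFDerivAt_eq_zero ((innerSL ℝ c).hasFDerivAt.sub hf.hasFDerivAt)
  apply (InnerProductSpace.toDual ℝ F).injective
  rw [toDual_gradient, ← sub_eq_zero.mp hzero]
  ext v
  simp

theorem image_add_le_of_norm_gradient_sub_le {L : ℝ} (hf : Differentiable ℝ f)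
    (hsmooth : ∀ x y, ‖gradient f x - gradient f y‖ ≤ L * ‖x - y‖) (x v : F) :
    f (x + v) ≤ f x + ⟪gradient f x, v⟫ + L / 2 * ‖v‖ ^ 2 := by
  set g : ℝ → ℝ := fun t => f (x + t • v) - t * ⟪gradient f x, v⟫ - L / 2 * ‖v‖ ^ 2 * t ^ 2
  have hderiv : ∀ t, HasDerivAt g
      (⟪gradient f (x + t • v), v⟫ - ⟪gradient f x, v⟫ - L * ‖v‖ ^ 2 * t) t := by
    intro t
    have hline : HasDerivAt (fun t : ℝ => x + t • v) v t := by
      simpa using ((hasDerivAt_id t).smul_const v).const_add x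
    have hcomp := (hf (x + t • v)).hasFDerivAt.comp_hasDerivAt t hline
    rw [← inner_gradient_left] at hcomp
    refine ((hcomp.sub ((hasDerivAt_id t).mul_const ⟪gradient f x, v⟫)).sub
      ((hasDerivAt_pow 2 t).const_mul (L / 2 * ‖v‖ ^ 2))).congr_deriv ?_
    norm_num
    ring
  have hanti : AntitoneOn g (Set.Ici 0) := by
    refine antitoneOn_of_hasDerivWithinAt_nonpos (convex_Ici 0)
      (HasDerivAt.continuousOn fun t _ => hderiv t) (fun t _ => (hderiv t).hasDerivWithinAt) ?_
    intro t ht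
    rw [interior_Ici] at ht
    calc ⟪gradient f (x + t • v), v⟫ - ⟪gradient f x, v⟫ - L * ‖v‖ ^ 2 * t
        = ⟪gradient f (x + t • v) - gradient f x, v⟫ - L * ‖v‖ ^ 2 * t := by
          rw [inner_sub_left]
      _ ≤ L * ‖(x + t • v) - x‖ * ‖v‖ - L * ‖v‖ ^ 2 * t := by
          gcongr
          exact (real_inner_le_norm _ _).trans
            (mul_le_mul_of_nonneg_right (hsmooth _ _) (norm_nonneg v))
      _ = 0 := by
          rw [add_sub_cancel_left, norm_smul, Real.norm_of_nonneg ht.le]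
          ring
  have h01 : g 1 ≤ g 0 := hanti (Set.mem_Ici.mpr le_rfl) (Set.mem_Ici.mpr zero_le_one) zero_le_one
  simp only [g, one_smul, zero_smul, add_zero] at h01
  linarith

theorem conjugate_growth_of_norm_gradient_sub_le {L : ℝ} (hL : 0 < L) (hf : Differentiable ℝ f)
    (hsmooth : ∀ x y, ‖gradient f x - gradient f y‖ ≤ L * ‖x - y‖) {c₁ c₂ x₁ x₂ : F}
    (h₁ : IsMaxOn (fun x => ⟪c₁, x⟫ - f x) Set.univ x₁)
    (h₂ : IsMaxOn (fun x => ⟪c₂, x⟫ - f x) Set.univ x₂) :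
    ⟪c₂, x₂⟫ - f x₂ + ⟪c₁ - c₂, x₂⟫ + ‖c₁ - c₂‖ ^ 2 / (2 * L) ≤ ⟪c₁, x₁⟫ - f x₁ := by
  obtain ⟨d, rfl⟩ : ∃ d, c₁ = c₂ + d := ⟨c₁ - c₂, by abel⟩
  have hgrad : gradient f x₂ = c₂ :=
    (h₂.isLocalMax Filter.univ_mem).gradient_eq_of_inner_sub (hf x₂)
  have htest : ⟪c₂ + d, x₂ + L⁻¹ • d⟫ - f (x₂ + L⁻¹ • d) ≤ ⟪c₂ + d, x₁⟫ - f x₁ :=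
    h₁ (Set.mem_univ _)
  have hdescent := image_add_le_of_norm_gradient_sub_le hf hsmooth x₂ (L⁻¹ • d)
  rw [hgrad, norm_smul, Real.norm_of_nonneg (inv_nonneg.mpr hL.le)] at hdescent
  rw [inner_add_left, inner_add_right, inner_add_right, real_inner_smul_right (x := d),
    real_inner_self_eq_norm_sq] at htest
  rw [add_sub_cancel_left]
  have hgain : L⁻¹ * ‖d‖ ^ 2 - L / 2 * (L⁻¹ * ‖d‖) ^ 2 = ‖d‖ ^ 2 / (2 * L) := by
    field_simp
    ring
  linarith

end Gradient

theorem LinearMap.IsPositive.mul_inner_le_norm_sq {E : Type*} [NormedAddCommGroup E]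
    [InnerProductSpace ℝ E] [FiniteDimensional ℝ E] {T : E →ₗ[ℝ] E} (hT : T.IsPositive)
    {μ : ℝ} (hμ : ∀ c ∈ spectrum ℝ T, 0 < c → μ ≤ c) (u : E) :
    μ * ⟪T u, u⟫ ≤ ‖T u‖ ^ 2 := by
  set b := hT.isSymmetric.eigenvectorBasis rfl
  set eig := hT.isSymmetric.eigenvalues rfl
  have hrepr : ∀ i, b.repr (T u) i = eig i * b.repr u i :=
    hT.isSymmetric.eigenvectorBasis_apply_self_apply rfl u
  have hinner : ⟪T u, u⟫ = ∑ i, eig i * b.repr u i ^ 2 := by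
    rw [← b.repr.inner_map_map, PiLp.inner_apply]
    refine Finset.sum_congr rfl fun i _ => ?_
    simp only [hrepr, RCLike.inner_apply, conj_trivial]
    ring
  have hnorm : ‖T u‖ ^ 2 = ∑ i, (eig i * b.repr u i) ^ 2 := by
    rw [← b.repr.norm_map, EuclideanSpace.norm_sq_eq]
    simp only [hrepr, Real.norm_eq_abs, sq_abs]
  rw [hinner, hnorm, Finset.mul_sum]
  refine Finset.sum_le_sum fun i _ => ?_
  rcases (hT.nonneg_eigenvalues rfl i : 0 ≤ eig i).eq_or_lt with h0 | hpos
  · simp [show eig i = 0 from h0.symm]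
  · have hμi : μ ≤ eig i := hμ _ (hT.isSymmetric.hasEigenvalue_eigenvalues rfl i).mem_spectrum hpos
    nlinarith [sq_nonneg (b.repr u i)]

theorem Matrix.toEuclideanLin_transpose_eq_adjoint_s8 {m n : Type*} [Fintype m] [Fintype n]
    [DecidableEq m] [DecidableEq n] (A : Matrix m n ℝ) :
    toEuclideanLin Aᵀ = (toEuclideanLin A).adjoint := by
  rw [← conjTranspose_eq_transpose_of_trivial, toEuclideanLin_conjTranspose_eq_adjoint]

theorem Matrix.sInf_spectrum_pos_mul_norm_sq_le {m n : Type*} [Fintype m] [Fintype n]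
    [DecidableEq m] [DecidableEq n] (A : Matrix m n ℝ) (u : EuclideanSpace ℝ n) :
    sInf (spectrum ℝ (Aᵀ * A) ∩ Set.Ioi 0) * ‖toEuclideanLin A u‖ ^ 2
      ≤ ‖toEuclideanLin Aᵀ (toEuclideanLin A u)‖ ^ 2 := by
  have hpos : (toEuclideanLin (Aᵀ * A)).IsPositive := by
    rw [isPositive_toEuclideanLin_iff, ← conjTranspose_eq_transpose_of_trivial]
    exact posSemidef_conjTranspose_mul_self A
  have happly : toEuclideanLin (Aᵀ * A) u = toEuclideanLin Aᵀ (toEuclideanLin A u) := by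
    ext
    simp [mulVec_mulVec]
  have hinner : ⟪toEuclideanLin (Aᵀ * A) u, u⟫ = ‖toEuclideanLin A u‖ ^ 2 := by
    rw [happly, toEuclideanLin_transpose_eq_adjoint_s8, LinearMap.adjoint_inner_left,
      real_inner_self_eq_norm_sq]
  have hbound : ∀ c ∈ spectrum ℝ (toEuclideanLin (Aᵀ * A)), 0 < c →
      sInf (spectrum ℝ (Aᵀ * A) ∩ Set.Ioi 0) ≤ c := fun c hc hc₀ =>
    csInf_le ⟨0, fun _ h => h.2.le⟩ ⟨spectrum_toLpLin (A := Aᵀ * A) 2 ▸ hc, hc₀⟩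
  have := hpos.mul_inner_le_norm_sq hbound u
  rwa [hinner, happly] at this

theorem dual_strong_convexity_on_range_general
    {n p : ℕ} (f : EuclideanSpace ℝ (Fin n) → ℝ) (L : ℝ) (hL : 0 < L)
    (hdiff : Differentiable ℝ f)
    (hsmooth : ∀ x y : EuclideanSpace ℝ (Fin n),
      ‖gradient f x - gradient f y‖ ≤ L * ‖x - y‖)
    (A : Matrix (Fin p) (Fin n) ℝ)
    (xstar : EuclideanSpace ℝ (Fin p) → EuclideanSpace ℝ (Fin n))
    (hxstar : ∀ y, IsMaxOn (fun x => ⟪Matrix.toEuclideanLin Aᵀ y, x⟫ - f x) Set.univ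
      (xstar y)) :
    ∀ y₁ y₂ : EuclideanSpace ℝ (Fin p),
      y₁ - y₂ ∈ LinearMap.range (Matrix.toEuclideanLin A) →
      (⟪Matrix.toEuclideanLin Aᵀ y₂, xstar y₂⟫ - f (xstar y₂))
        + ⟪Matrix.toEuclideanLin A (xstar y₂), y₁ - y₂⟫
        + sInf (spectrum ℝ (Aᵀ * A) ∩ Set.Ioi 0) / (2 * L) * ‖y₁ - y₂‖ ^ 2
      ≤ ⟪Matrix.toEuclideanLin Aᵀ y₁, xstar y₁⟫ - f (xstar y₁) := by
  rintro y₁ y₂ ⟨u, hu⟩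
  have hgrowth :=
    conjugate_growth_of_norm_gradient_sub_le hL hdiff hsmooth (hxstar y₁) (hxstar y₂)
  rw [← map_sub] at hgrowth
  have hadjoint : ⟪toEuclideanLin Aᵀ (y₁ - y₂), xstar y₂⟫
      = ⟪toEuclideanLin A (xstar y₂), y₁ - y₂⟫ := by
    rw [toEuclideanLin_transpose_eq_adjoint_s8, LinearMap.adjoint_inner_left, real_inner_comm]
  have hspectral := sInf_spectrum_pos_mul_norm_sq_le A u
  rw [hu] at hspectral
  have hscaled : sInf (spectrum ℝ (Aᵀ * A) ∩ Set.Ioi 0) / (2 * L) * ‖y₁ - y₂‖ ^ 2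
      ≤ ‖toEuclideanLin Aᵀ (y₁ - y₂)‖ ^ 2 / (2 * L) := by
    rw [div_mul_eq_mul_div]
    gcongr
  linarith

/-- For convex `L`-smooth `f`, the dual function `φ(y) = max_x {⟨Aᵀy, x⟩ - f(x)}`
is `λ_min⁺(AᵀA)/L`-strongly convex along the range of `A`. -/
theorem dual_strong_convexity_on_range
    {n p : ℕ} (f : EuclideanSpace ℝ (Fin n) → ℝ) (L : ℝ) (hL : 0 < L)
    (hconv : ConvexOn ℝ Set.univ f) (hdiff : Differentiable ℝ f)
    (hsmooth : ∀ x y : EuclideanSpace ℝ (Fin n),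
      ‖gradient f x - gradient f y‖ ≤ L * ‖x - y‖)
    (A : Matrix (Fin p) (Fin n) ℝ)
    (xstar : EuclideanSpace ℝ (Fin p) → EuclideanSpace ℝ (Fin n))
    (hxstar : ∀ y, IsMaxOn (fun x => ⟪Matrix.toEuclideanLin Aᵀ y, x⟫ - f x) Set.univ
      (xstar y)) :
    ∀ y₁ y₂ : EuclideanSpace ℝ (Fin p),
      y₁ - y₂ ∈ LinearMap.range (Matrix.toEuclideanLin A) →
      (⟪Matrix.toEuclideanLin Aᵀ y₂, xstar y₂⟫ - f (xstar y₂))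
        + ⟪Matrix.toEuclideanLin A (xstar y₂), y₁ - y₂⟫
        + sInf (spectrum ℝ (Aᵀ * A) ∩ Set.Ioi 0) / (2 * L) * ‖y₁ - y₂‖ ^ 2
      ≤ ⟪Matrix.toEuclideanLin Aᵀ y₁, xstar y₁⟫ - f (xstar y₁) :=
  dual_strong_convexity_on_range_general f L hL hdiff hsmooth A xstar hxstar
end

section
/- Let f : ℝ^n → ℝ be convex, let A ∈ ℝ^{p×n}, suppose the problem min_{Ax=0} f(x) has a solution with optimal value f*, and suppose there exists a dual solution y* ∈ ℝ^p, i.e. inf_{x ∈ ℝ^n} {f(x) − ⟨y*, Ax⟩} = f*, with R = ‖y*‖₂ > 0. Fix ε > 0 and define the penalized function F_ε(x) = f(x) + (R²/ε)·‖Ax‖₂². Then for any x̄ ∈ ℝ^n with F_ε(x̄) − inf_x F_ε(x) ≤ ε, one has f(x̄) − f* ≤ ε and ‖A x̄‖₂ ≤ 2ε/R. -/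
open RealInnerProductSpace Matrix

/-- Penalty reformulation: if `x̄` minimizes `F_ε(x) = f(x) + (R²/ε)‖Ax‖²` up to accuracy
`ε`, then `f(x̄) - f* ≤ ε` and `‖A x̄‖ ≤ 2ε/R`, where `R = ‖y*‖` for a dual solution `y*`. -/
theorem penalty_gives_eps_solution
    {n p : ℕ} (f : EuclideanSpace ℝ (Fin n) → ℝ)
    (hconv : ConvexOn ℝ Set.univ f)
    (A : Matrix (Fin p) (Fin n) ℝ)
    (xopt : EuclideanSpace ℝ (Fin n))
    (hfeas : Matrix.toEuclideanLin A xopt = 0)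
    (hopt : ∀ x, Matrix.toEuclideanLin A x = 0 → f xopt ≤ f x)
    (ystar : EuclideanSpace ℝ (Fin p))
    (hdual : ∀ x, f xopt ≤ f x - ⟪ystar, Matrix.toEuclideanLin A x⟫)
    (R : ℝ) (hR : R = ‖ystar‖) (hRpos : 0 < R)
    (ε : ℝ) (hε : 0 < ε)
    (xbar : EuclideanSpace ℝ (Fin n))
    (hxbar : ∀ x, f xbar + R ^ 2 / ε * ‖Matrix.toEuclideanLin A xbar‖ ^ 2
      ≤ (f x + R ^ 2 / ε * ‖Matrix.toEuclideanLin A x‖ ^ 2) + ε) :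
    f xbar - f xopt ≤ ε ∧ ‖Matrix.toEuclideanLin A xbar‖ ≤ 2 * ε / R := by
  set t := ‖Matrix.toEuclideanLin A xbar‖ with ht
  have ht0 : 0 ≤ t := norm_nonneg _
  have h1 := hxbar xopt
  rw [hfeas, norm_zero] at h1
  have h3 : |⟪ystar, Matrix.toEuclideanLin A xbar⟫| ≤ ‖ystar‖ * t :=
    abs_real_inner_le_norm _ _
  have h4 : -(R * t) ≤ ⟪ystar, Matrix.toEuclideanLin A xbar⟫ := by
    rw [hR]; linarith [(abs_le.mp h3).1]
  have h5 : f xopt ≤ f xbar + R * t := by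
    have := hdual xbar; linarith
  have h6 : R ^ 2 * t ^ 2 ≤ ε * (R * t) + ε ^ 2 := by
    have h7 : R ^ 2 / ε * t ^ 2 ≤ R * t + ε := by nlinarith
    have := mul_le_mul_of_nonneg_left h7 (le_of_lt hε)
    have hε' : ε ≠ 0 := ne_of_gt hε
    field_simp at this
    nlinarith
  have hRt : R * t ≤ 2 * ε := by nlinarith [mul_nonneg (le_of_lt hRpos) ht0]
  constructor
  · nlinarith [mul_nonneg (div_nonneg (sq_nonneg R) hε.le) (sq_nonneg t)]
  · rw [le_div_iff₀ hRpos]; nlinarith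
end
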